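/- arXiv:1006.2541 — 4 statements merged into one kernel-verified Lean document; each statement's English description precedes it below -/
import Mathlib

section
/- Let Ω be a set and let H be a linear space of real-valued functions on Ω containing all constant functions. Let E : H → ℝ be a sublinear expectation, i.e. E is monotone (X ≥ Y pointwise implies E[X] ≥ E[Y]), E[c] = c for every constant function c, subadditive (E[X + Y] ≤ E[X] + E[Y] for all X, Y ∈ H), and positively homogeneous (E[λX] = λE[X] for all λ ≥ 0, X ∈ H). Then for every X ∈ H there exists a linear functional L : H → ℝ such that L is monotone, L[1] = 1, L[Y] ≤ E[Y] for all Y ∈ H, and L[X] = E[X]. Consequently E[X] = max over the family of all monotone linear functionals dominated by E of their value at X. -/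
/-!
For fixed `X`, the functional `c • X ↦ c * E X` on the line through `X` is dominated by `E`,
because `E (-X) ≥ -E X` by subadditivity. Hahn–Banach extends it to a linear `L ≤ E` on `H`.
Domination by a monotone `E` with `E 0 = 0` makes `L` monotone, and `E (-1) = -1` pins `L 1 = 1`.
-/

section Sublinear

variable {V : Type*} [AddCommGroup V] [Module ℝ V] {N : V → ℝ}

theorem map_zero_of_pos_homogeneous (N_hom : ∀ c : ℝ, 0 < c → ∀ x, N (c • x) = c * N x) :
    N 0 = 0 := by
  have h := N_hom 2 two_pos 0
  rw [smul_zero] at h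
  linarith

theorem mul_le_map_smul_of_sublinear (N_hom : ∀ c : ℝ, 0 < c → ∀ x, N (c • x) = c * N x)
    (N_add : ∀ x y, N (x + y) ≤ N x + N y) (c : ℝ) (x : V) : c * N x ≤ N (c • x) := by
  rcases lt_trichotomy c 0 with hc | rfl | hc
  · have h := N_add (c • x) ((-c) • x)
    rw [← add_smul, add_neg_cancel, zero_smul, map_zero_of_pos_homogeneous N_hom,
      N_hom (-c) (neg_pos.mpr hc)] at h
    linarith
  · rw [zero_mul, zero_smul, map_zero_of_pos_homogeneous N_hom]
  · rw [N_hom c hc]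

theorem exists_linearMap_le_sublinear_eq (N_hom : ∀ c : ℝ, 0 < c → ∀ x, N (c • x) = c * N x)
    (N_add : ∀ x y, N (x + y) ≤ N x + N y) (x : V) :
    ∃ L : V →ₗ[ℝ] ℝ, (∀ y, L y ≤ N y) ∧ L x = N x := by
  have well_defined : ∀ c : ℝ, c • x = 0 → c • N x = 0 := by
    intro c hcx
    rcases (smul_eq_zero.mp hcx) with rfl | rfl
    · exact zero_smul ℝ _
    · rw [map_zero_of_pos_homogeneous N_hom, smul_zero]
  let f : V →ₗ.[ℝ] ℝ := LinearPMap.mkSpanSingleton' x (N x) well_defined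
  have hdom : f.domain = ℝ ∙ x := LinearPMap.domain_mkSpanSingleton x (N x) well_defined
  have hx : x ∈ f.domain := hdom ▸ Submodule.mem_span_singleton_self x
  have f_le : ∀ y : f.domain, f y ≤ N y := by
    rintro ⟨y, hy⟩
    obtain ⟨c, rfl⟩ := Submodule.mem_span_singleton.mp (hdom ▸ hy)
    rw [LinearPMap.mkSpanSingleton'_apply]
    exact mul_le_map_smul_of_sublinear N_hom N_add c x
  obtain ⟨L, hLf, hLN⟩ := exists_extension_of_le_sublinear f N N_hom N_add f_le
  exact ⟨L, hLN, (hLf ⟨x, hx⟩).trans (LinearPMap.mkSpanSingleton'_apply_self _ _ _ _)⟩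

end Sublinear

theorem LinearMap.apply_eq_of_le_of_map_neg {V : Type*} [AddCommGroup V] [Module ℝ V]
    {N : V → ℝ} {L : V →ₗ[ℝ] ℝ} (hLN : ∀ y, L y ≤ N y) {u : V} (hu : N (-u) = -N u) :
    L u = N u := by
  have h := hLN (-u)
  rw [map_neg, hu] at h
  linarith [hLN u]

theorem LinearMap.monotone_of_le_of_monotone {V : Type*} [AddCommGroup V] [PartialOrder V]
    [IsOrderedAddMonoid V] [Module ℝ V] {N : V → ℝ} {L : V →ₗ[ℝ] ℝ} (hLN : ∀ y, L y ≤ N y)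
    (hN : Monotone N) (hN0 : N 0 = 0) : Monotone L := by
  intro z y hzy
  have h : L (z - y) ≤ 0 := (hLN _).trans (hN0 ▸ hN (sub_nonpos.mpr hzy))
  rw [map_sub] at h
  linarith

/-- **Representation theorem for sublinear expectations.**
Let `H` be a linear space of real functions on `Ω` containing the constants, and let
`E : H → ℝ` be a sublinear expectation (monotone, constant-preserving, subadditive,
positively homogeneous).  Then for each `X ∈ H` the value `E X` is the maximum of `L X`
over all monotone linear functionals `L` on `H` with `L 1 = 1` dominated by `E`. -/
theorem sublinear_expectation_representation
    {Ω : Type*} (H : Submodule ℝ (Ω → ℝ))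
    (hconstH : ∀ c : ℝ, (fun _ : Ω => c) ∈ H)
    (E : H → ℝ)
    (hmono : ∀ X Y : H, (∀ ω, (Y : Ω → ℝ) ω ≤ (X : Ω → ℝ) ω) → E Y ≤ E X)
    (hconst : ∀ c : ℝ, E ⟨fun _ => c, hconstH c⟩ = c)
    (hsub : ∀ X Y : H, E (X + Y) ≤ E X + E Y)
    (hpos : ∀ (X : H) (l : ℝ), 0 ≤ l → E (l • X) = l * E X)
    (X : H) :
    IsGreatest
      {r : ℝ | ∃ L : H →ₗ[ℝ] ℝ,
        (∀ Y Z : H, (∀ ω, (Z : Ω → ℝ) ω ≤ (Y : Ω → ℝ) ω) → L Z ≤ L Y) ∧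
        L ⟨fun _ => 1, hconstH 1⟩ = 1 ∧
        (∀ Y : H, L Y ≤ E Y) ∧
        r = L X}
      (E X) := by
  have E_hom : ∀ c : ℝ, 0 < c → ∀ Y, E (c • Y) = c * E Y := fun c hc Y => hpos Y c hc.le
  obtain ⟨L, hLE, hLX⟩ := exists_linearMap_le_sublinear_eq E_hom hsub X
  have hL_mono : Monotone L :=
    L.monotone_of_le_of_monotone hLE (fun Z Y => hmono Y Z) (map_zero_of_pos_homogeneous E_hom)
  have hE_neg_one : E (-⟨fun _ => 1, hconstH 1⟩) = -E ⟨fun _ => 1, hconstH 1⟩ := by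
    rw [hconst 1]
    exact hconst (-1)
  have hL_one : L ⟨fun _ => 1, hconstH 1⟩ = 1 := by
    rw [L.apply_eq_of_le_of_map_neg hLE hE_neg_one, hconst 1]
  refine ⟨⟨L, fun Y Z hZY => hL_mono hZY, hL_one, hLE, hLX.symm⟩, ?_⟩
  rintro r ⟨L', -, -, hL'E, rfl⟩
  exact hL'E X
end

section
/- Let Ω be a complete separable metric space and let 𝒫 be a nonempty set of Borel probability measures on Ω. The upper expectation 𝔼[X] := sup_{P ∈ 𝒫} ∫ X dP is regular on C_b(Ω) — meaning that for every sequence (X_n) of bounded continuous real functions on Ω with X_n(ω) decreasing to 0 for every ω ∈ Ω, one has 𝔼[X_n] ↓ 0 — if and only if 𝒫 is relatively compact in the space of Borel probability measures on Ω equipped with the topology of weak convergence (i.e. the closure of 𝒫 is compact). -/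
/-!
If `closure 𝔓` is compact, the maps `P ↦ ∫ X n dP` are continuous on it and decrease pointwise
to `0` by monotone convergence, so by Dini's theorem they tend to `0` uniformly there.

Conversely, feed regularity the cutoffs `min 1 (infDist · {u 0, …, u n} / δ)` along a dense
sequence `u`: by Markov's inequality, for all `ε, δ > 0` a finite union of closed `δ`-balls
carries mass `≥ 1 - ε` uniformly on `𝔓`. Intersecting such sets for `δ = 1 / (k + 1)` and
summable `ε k` gives a closed totally bounded, hence compact, set witnessing tightness, and
Prokhorov's theorem concludes.
-/

open MeasureTheory Filter Topology BoundedContinuousFunction Metric Set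
open scoped ENNReal

section UpperExpectation

variable {Ω : Type*} [MeasurableSpace Ω] [TopologicalSpace Ω]

noncomputable def upperExpectation (𝔓 : Set (ProbabilityMeasure Ω)) (f : Ω →ᵇ ℝ) : ℝ :=
  ⨆ P : 𝔓, ∫ ω, f ω ∂(P : Measure Ω)

def IsRegularUpperExpectation (𝔓 : Set (ProbabilityMeasure Ω)) : Prop :=
  ∀ X : ℕ → Ω →ᵇ ℝ, (∀ ω, Antitone (X · ω)) → (∀ ω, Tendsto (X · ω) atTop (𝓝 0)) →
    Tendsto (fun n => upperExpectation 𝔓 (X n)) atTop (𝓝 0)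

variable {𝔓 : Set (ProbabilityMeasure Ω)}

lemma upperExpectation_nonneg {f : Ω →ᵇ ℝ} (hf : 0 ≤ f) : 0 ≤ upperExpectation 𝔓 f :=
  Real.iSup_nonneg fun _ => integral_nonneg hf

lemma upperExpectation_le_of_forall_integral_le {f : Ω →ᵇ ℝ} {c : ℝ} (hc : 0 ≤ c)
    (h : ∀ P ∈ 𝔓, ∫ ω, f ω ∂(P : Measure Ω) ≤ c) : upperExpectation 𝔓 f ≤ c :=
  Real.iSup_le (fun P => h P P.2) hc

variable [OpensMeasurableSpace Ω]

lemma bddAbove_range_integral (𝔓 : Set (ProbabilityMeasure Ω)) (f : Ω →ᵇ ℝ) :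
    BddAbove (range fun P : 𝔓 => ∫ ω, f ω ∂(P : Measure Ω)) :=
  ⟨‖f‖, by
    rintro _ ⟨P, rfl⟩
    exact (le_abs_self _).trans (by simpa using f.norm_integral_le_norm (P : Measure Ω))⟩

lemma integral_le_upperExpectation (f : Ω →ᵇ ℝ) {P : ProbabilityMeasure Ω} (hP : P ∈ 𝔓) :
    ∫ ω, f ω ∂(P : Measure Ω) ≤ upperExpectation 𝔓 f :=
  le_ciSup (f := fun P : 𝔓 => ∫ ω, f ω ∂(P : Measure Ω)) (bddAbove_range_integral 𝔓 f) ⟨P, hP⟩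

lemma upperExpectation_mono {f g : Ω →ᵇ ℝ} (hfg : f ≤ g) :
    upperExpectation 𝔓 f ≤ upperExpectation 𝔓 g :=
  ciSup_mono (bddAbove_range_integral 𝔓 g) fun _ =>
    integral_mono (f.integrable _) (g.integrable _) hfg

lemma antitone_upperExpectation {X : ℕ → Ω →ᵇ ℝ} (hX : ∀ ω, Antitone (X · ω)) :
    Antitone fun n => upperExpectation 𝔓 (X n) :=
  fun _ _ hmn => upperExpectation_mono fun ω => hX ω hmn

theorem isRegularUpperExpectation_of_isCompact_closure
    (h𝔓 : IsCompact (closure 𝔓)) : IsRegularUpperExpectation 𝔓 := by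
  intro X hanti hlim
  have hX (n : ℕ) : 0 ≤ X n := fun ω => (hanti ω).le_of_tendsto (hlim ω) n
  let E : ℕ → ProbabilityMeasure Ω → ℝ := fun n P => ∫ ω, X n ω ∂(P : Measure Ω)
  have hE_lim : ∀ P, Tendsto (E · P) atTop (𝓝 0) := fun P => by
    simpa using integral_tendsto_of_tendsto_of_antitone (fun n => (X n).integrable _)
      (integrable_zero _ _ _) (ae_of_all _ hanti) (ae_of_all _ hlim)
  have hE_unif : TendstoUniformlyOn E 0 atTop (closure 𝔓) :=
    Antitone.tendstoUniformlyOn_of_forall_tendsto h𝔓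
      (fun n =>
        (ProbabilityMeasure.continuous_integral_boundedContinuousFunction (X n)).continuousOn)
      (fun P _ m n hmn => integral_mono ((X n).integrable _) ((X m).integrable _)
        fun ω => hanti ω hmn)
      continuousOn_const (fun P _ => hE_lim P)
  refine tendsto_order.2 ⟨fun a ha => Eventually.of_forall fun n =>
    ha.trans_le (upperExpectation_nonneg (hX n)), fun a ha => ?_⟩
  filter_upwards [(Metric.tendstoUniformlyOn_iff.1 hE_unif) (a / 2) (by positivity)] with n hn
  refine (upperExpectation_le_of_forall_integral_le (by positivity) fun P hP => ?_).trans_lt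
    (half_lt_self ha)
  exact (le_abs_self _).trans (by simpa [Real.dist_eq] using (hn P (subset_closure hP)).le)

end UpperExpectation

section Cutoff

variable {Ω : Type*} [PseudoMetricSpace Ω]

lemma tendsto_infDist_image_Iic_denseSeq [TopologicalSpace.SeparableSpace Ω] [Nonempty Ω] (ω : Ω) :
    Tendsto (fun n => infDist ω (TopologicalSpace.denseSeq Ω '' Iic n)) atTop (𝓝 0) := by
  refine tendsto_order.2 ⟨fun a ha => Eventually.of_forall fun n => ha.trans_le infDist_nonneg,
    fun a ha => ?_⟩
  obtain ⟨i, hi⟩ := (TopologicalSpace.denseRange_denseSeq Ω).exists_dist_lt ω ha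
  filter_upwards [eventually_ge_atTop i] with n hn
  exact (infDist_le_dist_of_mem (mem_image_of_mem _ (mem_Iic.2 hn))).trans_lt hi

noncomputable def infDistCutoff {δ : ℝ} (hδ : 0 < δ) (s : Set Ω) : Ω →ᵇ ℝ :=
  ofNormedAddCommGroup (fun ω => min 1 (infDist ω s / δ))
    (continuous_const.min ((continuous_infDist_pt s).div_const δ)) 1 fun ω => by
      rw [Real.norm_eq_abs, abs_le]
      exact ⟨(neg_nonpos.2 zero_le_one).trans
        (le_min zero_le_one (div_nonneg infDist_nonneg hδ.le)), min_le_left _ _⟩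

variable {δ : ℝ} (hδ : 0 < δ)
include hδ

lemma infDistCutoff_nonneg (s : Set Ω) : 0 ≤ infDistCutoff hδ s :=
  fun _ => le_min zero_le_one (div_nonneg infDist_nonneg hδ.le)

lemma infDistCutoff_anti {s t : Set Ω} (hs : s.Nonempty) (hst : s ⊆ t) :
    infDistCutoff hδ t ≤ infDistCutoff hδ s :=
  fun _ => min_le_min_left 1
    (div_le_div_of_nonneg_right (infDist_le_infDist_of_subset hst hs) hδ.le)

lemma infDistCutoff_eq_one_of_notMem_thickening {s : Set Ω} (hs : s.Nonempty) {ω : Ω}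
    (hω : ω ∉ thickening δ s) : infDistCutoff hδ s ω = 1 := by
  rw [mem_thickening_iff_infDist_lt hs, not_lt] at hω
  exact min_eq_left ((one_le_div hδ).2 hω)

lemma tendsto_infDistCutoff_zero {s : ℕ → Set Ω} {ω : Ω}
    (h : Tendsto (fun n => infDist ω (s n)) atTop (𝓝 0)) :
    Tendsto (fun n => infDistCutoff hδ (s n) ω) atTop (𝓝 0) :=
  squeeze_zero (fun n => infDistCutoff_nonneg hδ (s n) ω) (fun n => min_le_right _ _)
    (by simpa using h.div_const δ)

end Cutoff

section Tightness

variable {Ω : Type*} [MetricSpace Ω] [MeasurableSpace Ω] [BorelSpace Ω]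
  [TopologicalSpace.SeparableSpace Ω] {𝔓 : Set (ProbabilityMeasure Ω)}

theorem IsRegularUpperExpectation.exists_finite_measure_compl_cthickening_le
    (h : IsRegularUpperExpectation 𝔓) {ε δ : ℝ} (hε : 0 < ε) (hδ : 0 < δ) :
    ∃ t : Set Ω, t.Finite ∧ ∀ P ∈ 𝔓, (P : Measure Ω) (cthickening δ t)ᶜ ≤ ENNReal.ofReal ε := by
  rcases isEmpty_or_nonempty Ω with hΩ | hΩ
  · exact ⟨∅, finite_empty, fun P _ => absurd P.nonempty (not_nonempty_iff.2 hΩ)⟩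
  let s : ℕ → Set Ω := fun n => TopologicalSpace.denseSeq Ω '' Iic n
  have hs_ne (n : ℕ) : (s n).Nonempty := nonempty_Iic.image _
  let X (n : ℕ) := infDistCutoff hδ (s n)
  have hX_anti (ω : Ω) : Antitone (X · ω) := fun m n hmn =>
    infDistCutoff_anti hδ (hs_ne m) (image_mono (Iic_subset_Iic.2 hmn)) ω
  obtain ⟨n, hn⟩ := ((h X hX_anti fun ω => tendsto_infDistCutoff_zero hδ
    (tendsto_infDist_image_Iic_denseSeq ω)).eventually_lt_const hε).exists
  refine ⟨s n, (finite_Iic n).image _, fun P hP => ?_⟩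
  have hX_one : (cthickening δ (s n))ᶜ ⊆ {ω | 1 ≤ X n ω} := fun ω hω =>
    (infDistCutoff_eq_one_of_notMem_thickening hδ (hs_ne n)
      fun h' => hω (thickening_subset_cthickening δ _ h')).ge
  have hmarkov : (P : Measure Ω).real (cthickening δ (s n))ᶜ ≤ ε := calc
    _ ≤ 1 * (P : Measure Ω).real {ω | 1 ≤ X n ω} := by rw [one_mul]; exact measureReal_mono hX_one
    _ ≤ ∫ ω, X n ω ∂(P : Measure Ω) := mul_meas_ge_le_integral_of_nonneg
        (ae_of_all _ (infDistCutoff_nonneg hδ (s n))) ((X n).integrable _) 1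
    _ ≤ upperExpectation 𝔓 (X n) := integral_le_upperExpectation _ hP
    _ ≤ ε := hn.le
  rw [← ofReal_measureReal]
  exact ENNReal.ofReal_le_ofReal hmarkov

theorem IsRegularUpperExpectation.isTightMeasureSet [CompleteSpace Ω]
    (h : IsRegularUpperExpectation 𝔓) :
    IsTightMeasureSet {((P : ProbabilityMeasure Ω) : Measure Ω) | P ∈ 𝔓} := by
  rw [isTightMeasureSet_iff_exists_isCompact_measure_compl_le]
  intro ε hε
  obtain ⟨η, hη_pos, hη_sum⟩ := ENNReal.exists_pos_sum_of_countable hε.ne' ℕ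
  choose t ht_fin ht using fun k : ℕ =>
    h.exists_finite_measure_compl_cthickening_le (hη_pos k) (Nat.one_div_pos_of_nat (n := k))
  refine ⟨⋂ k : ℕ, cthickening (1 / ((k : ℝ) + 1)) (t k), ?_, ?_⟩
  · refine TotallyBounded.isCompact_of_isClosed ?_ (isClosed_iInter fun k => isClosed_cthickening)
    refine Metric.totallyBounded_iff.2 fun d hd => ?_
    obtain ⟨k, hk⟩ := exists_nat_one_div_lt hd
    refine ⟨t k, ht_fin k, (iInter_subset _ k).trans ?_⟩
    rw [← thickening_eq_biUnion_ball]
    exact cthickening_subset_thickening' hd hk _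
  · rintro _ ⟨P, hP, rfl⟩
    calc (P : Measure Ω) (⋂ k : ℕ, cthickening (1 / ((k : ℝ) + 1)) (t k))ᶜ
        ≤ ∑' k : ℕ, (P : Measure Ω) (cthickening (1 / ((k : ℝ) + 1)) (t k))ᶜ := by
          rw [compl_iInter]; exact measure_iUnion_le _
      _ ≤ ∑' k : ℕ, (η k : ℝ≥0∞) := ENNReal.tsum_le_tsum fun k : ℕ => by simpa using ht k P hP
      _ ≤ ε := hη_sum.le

end Tightness

theorem upper_expectation_regular_iff_relatively_compact_general
    {Ω : Type*} [MetricSpace Ω] [CompleteSpace Ω] [TopologicalSpace.SeparableSpace Ω]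
    [MeasurableSpace Ω] [BorelSpace Ω]
    (𝔓 : Set (ProbabilityMeasure Ω)) :
    (∀ X : ℕ → Ω →ᵇ ℝ,
        (∀ ω, Antitone fun n => X n ω) →
        (∀ ω, Tendsto (fun n => X n ω) atTop (𝓝 0)) →
        (Antitone (fun n => ⨆ P : 𝔓, ∫ ω, X n ω ∂((P : ProbabilityMeasure Ω) : Measure Ω)) ∧
          Tendsto (fun n => ⨆ P : 𝔓, ∫ ω, X n ω ∂((P : ProbabilityMeasure Ω) : Measure Ω))
            atTop (𝓝 0))) ↔
      IsCompact (closure 𝔓) := by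
  constructor
  · intro hreg
    exact isCompact_closure_of_isTightMeasureSet
      (IsRegularUpperExpectation.isTightMeasureSet fun X hanti hlim => (hreg X hanti hlim).2)
  · intro hcompact X hanti hlim
    exact ⟨antitone_upperExpectation hanti,
      isRegularUpperExpectation_of_isCompact_closure hcompact X hanti hlim⟩

/-- **Regularity of the upper expectation is equivalent to relative compactness.**
On a complete separable metric space `Ω`, the upper expectation
`𝔼[X] = sup_{P ∈ 𝔓} ∫ X dP` of a nonempty family `𝔓` of Borel probability measures
is regular on `C_b(Ω)` (i.e. `𝔼[X n] ↓ 0` whenever `X n ↓ 0` pointwise) if and only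
if `𝔓` is relatively compact for the topology of weak convergence. -/
theorem upper_expectation_regular_iff_relatively_compact
    {Ω : Type*} [MetricSpace Ω] [CompleteSpace Ω] [TopologicalSpace.SeparableSpace Ω]
    [MeasurableSpace Ω] [BorelSpace Ω]
    (𝔓 : Set (ProbabilityMeasure Ω)) (h𝔓 : 𝔓.Nonempty) :
    (∀ X : ℕ → Ω →ᵇ ℝ,
        (∀ ω, Antitone fun n => X n ω) →
        (∀ ω, Tendsto (fun n => X n ω) atTop (𝓝 0)) →
        (Antitone (fun n => ⨆ P : 𝔓, ∫ ω, X n ω ∂((P : ProbabilityMeasure Ω) : Measure Ω)) ∧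
          Tendsto (fun n => ⨆ P : 𝔓, ∫ ω, X n ω ∂((P : ProbabilityMeasure Ω) : Measure Ω))
            atTop (𝓝 0))) ↔
      IsCompact (closure 𝔓) :=
  upper_expectation_regular_iff_relatively_compact_general 𝔓
end

section
/- Let Ω be a complete separable metric space. Let Ê : (Ω → ℝ) → ℝ be a functional whose restriction to bounded Borel-measurable functions is a sublinear expectation: monotone (X ≥ Y pointwise implies Ê[X] ≥ Ê[Y]), Ê[c] = c for every constant c, subadditive (Ê[X+Y] ≤ Ê[X] + Ê[Y]), positively homogeneous (Ê[λX] = λÊ[X] for λ ≥ 0); and assume Ê is tight: for every ε > 0 there exists a compact set K ⊆ Ω with Ê[1_{K^c}] < ε. Let {E_α}_{α ∈ 𝒜} be a family of functionals E_α : C_b(Ω) → ℝ such that each E_α is monotone, E_α[c] = c for constants, and E_α[X] − E_α[Y] ≤ Ê[X − Y] for all X, Y ∈ C_b(Ω) and all α ∈ 𝒜. Then {E_α}_{α ∈ 𝒜} is weakly compact: for every sequence (α_n)_{n≥1} in 𝒜 there exists a strictly increasing sequence of indices (n_i)_{i≥1} such that for every φ ∈ C_b(Ω), the real sequence (E_{α_{n_i}}[φ])_{i≥1}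 is a Cauchy sequence. -/
open MeasureTheory Filter Topology BoundedContinuousFunction

/-- A bounded Borel-measurable real function. -/
def IsBoundedBorel {Ω : Type*} [MeasurableSpace Ω] (X : Ω → ℝ) : Prop :=
  Measurable X ∧ ∃ M : ℝ, ∀ ω, |X ω| ≤ M

/-!
Domination by `Ê` gives, simultaneously for all `α`,
`|E α φ - E α ψ| ≤ δ + ‖φ - ψ‖ * Ê[1_{Kᶜ}]` whenever `|φ - ψ| ≤ δ` on `K`.
By tightness choose compacts `K m` with `Ê[1_{(K m)ᶜ}] < 1 / (m + 1)`; since each `C(K m, ℝ)` is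
separable, every ball of `C_b(Ω)` contains a countable set whose restrictions to `K m` are dense.
The union `D` of these sets approximates every `φ ∈ C_b(Ω)` uniformly in `α`. The values
`E α ψ`, `ψ ∈ D`, lie in `[-‖ψ‖, ‖ψ‖]`, so a diagonal subsequence makes them converge for all
`ψ ∈ D` at once, and the uniform approximation passes the Cauchy property on to every `φ`.
-/

open Set Metric

theorem exists_strictMono_forall_tendsto_of_mem_isCompact {ι β : Type*} [Countable ι]
    [TopologicalSpace β] [FirstCountableTopology β] {s : ι → Set β} (hs : ∀ k, IsCompact (s k))
    (u : ℕ → ι → β) (hu : ∀ i k, u i k ∈ s k) :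
    ∃ a : ι → β, ∃ n : ℕ → ℕ, StrictMono n ∧ ∀ k, Tendsto (fun i => u (n i) k) atTop (𝓝 (a k)) := by
  obtain ⟨a, -, n, hn, hlim⟩ := (isCompact_univ_pi hs).tendsto_subseq fun i => mem_univ_pi.2 (hu i)
  exact ⟨a, n, hn, fun k => ((continuous_apply k).tendsto a).comp hlim⟩

theorem Metric.cauchySeq_of_forall_exists_cauchySeq_dist_lt {β : Type*} [PseudoMetricSpace β]
    {u : ℕ → β} (h : ∀ ε > 0, ∃ v : ℕ → β, CauchySeq v ∧ ∀ i, dist (u i) (v i) < ε) :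
    CauchySeq u := by
  refine Metric.cauchySeq_iff.2 fun ε hε => ?_
  obtain ⟨v, hv, huv⟩ := h (ε / 3) (by positivity)
  obtain ⟨N, hN⟩ := Metric.cauchySeq_iff.1 hv (ε / 3) (by positivity)
  refine ⟨N, fun i hi j hj => ?_⟩
  calc dist (u i) (u j) ≤ dist (u i) (v i) + dist (u j) (v j) + dist (v i) (v j) :=
        dist_triangle4_right _ _ _ _
    _ < ε / 3 + ε / 3 + ε / 3 := by gcongr; exacts [huv i, huv j, hN i hi j hj]
    _ = ε := by ring

theorem Set.Countable.exists_subset_image_eq {α β : Type*} {f : α → β} {s : Set α} {t : Set β}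
    (ht : t.Countable) (hts : t ⊆ f '' s) : ∃ u ⊆ s, u.Countable ∧ f '' u = t := by
  obtain ⟨u, hus, rfl⟩ := subset_image_iff.1 hts
  obtain ⟨v, hvu, hv⟩ := exists_subset_bijOn u f
  exact ⟨v, hvu.trans hus, hv.mapsTo.countable_of_injOn hv.injOn ht, hv.image_eq⟩

theorem BoundedContinuousFunction.exists_countable_forall_dist_lt_on_compact
    {Ω β : Type*} [PseudoMetricSpace Ω] [PseudoMetricSpace β] [SecondCountableTopology β]
    {K : Set Ω} (hK : IsCompact K) (S : Set (Ω →ᵇ β)) :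
    ∃ T ⊆ S, T.Countable ∧ ∀ φ ∈ S, ∀ ε > 0, ∃ ψ ∈ T, ∀ ω ∈ K, dist (φ ω) (ψ ω) < ε := by
  have : CompactSpace K := isCompact_iff_compactSpace.1 hK
  let r : (Ω →ᵇ β) → C(K, β) := fun φ => φ.toContinuousMap.restrict K
  obtain ⟨t, hts, htc, hSt⟩ :=
    (TopologicalSpace.IsSeparable.of_separableSpace (r '' S)).exists_countable_dense_subset
  obtain ⟨T, hTS, hTc, rfl⟩ := htc.exists_subset_image_eq hts
  refine ⟨T, hTS, hTc, fun φ hφ ε hε => ?_⟩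
  obtain ⟨_, ⟨ψ, hψT, rfl⟩, hφψ⟩ := mem_closure_iff.1 (hSt (mem_image_of_mem r hφ)) ε hε
  exact ⟨ψ, hψT, fun ω hω => (ContinuousMap.dist_apply_le_dist (f := r φ) ⟨ω, hω⟩).trans_lt hφψ⟩

theorem BoundedContinuousFunction.exists_countable_forall_norm_le_dist_lt_on_compact
    {Ω : Type*} [PseudoMetricSpace Ω] {K : ℕ → Set Ω} (hK : ∀ m, IsCompact (K m)) :
    ∃ D : Set (Ω →ᵇ ℝ), D.Countable ∧ ∀ m (φ : Ω →ᵇ ℝ), ∀ ε > 0,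
      ∃ ψ ∈ D, ‖ψ‖ ≤ ‖φ‖ + 1 ∧ ∀ ω ∈ K m, dist (φ ω) (ψ ω) < ε := by
  choose T hTS hTc hT using fun m (q : ℕ) =>
    exists_countable_forall_dist_lt_on_compact (hK m) (closedBall (0 : Ω →ᵇ ℝ) q)
  refine ⟨⋃ m, ⋃ q, T m q, countable_iUnion fun m => countable_iUnion (hTc m), fun m φ ε hε => ?_⟩
  have hφ : φ ∈ closedBall 0 (⌈‖φ‖⌉₊ : ℝ) := mem_closedBall_zero_iff.2 (Nat.le_ceil _)
  obtain ⟨ψ, hψT, hφψ⟩ := hT m _ φ hφ ε hε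
  refine ⟨ψ, mem_iUnion₂.2 ⟨m, _, hψT⟩, ?_, hφψ⟩
  exact (mem_closedBall_zero_iff.1 (hTS m _ hψT)).trans (Nat.ceil_lt_add_one (norm_nonneg φ)).le

section IsBoundedBorel

variable {Ω : Type*} [MeasurableSpace Ω]

theorem isBoundedBorel_const (c : ℝ) : IsBoundedBorel fun _ : Ω => c :=
  ⟨measurable_const, |c|, fun _ => le_rfl⟩

theorem IsBoundedBorel.add {X Y : Ω → ℝ} (hX : IsBoundedBorel X) (hY : IsBoundedBorel Y) :
    IsBoundedBorel fun ω => X ω + Y ω := by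
  obtain ⟨hXm, M, hM⟩ := hX
  obtain ⟨hYm, N, hN⟩ := hY
  exact ⟨hXm.add hYm, M + N, fun ω => (abs_add_le _ _).trans (add_le_add (hM ω) (hN ω))⟩

theorem IsBoundedBorel.const_mul {X : Ω → ℝ} (hX : IsBoundedBorel X) (c : ℝ) :
    IsBoundedBorel fun ω => c * X ω := by
  obtain ⟨hXm, M, hM⟩ := hX
  exact ⟨hXm.const_mul c, |c| * M, fun ω => (abs_mul c (X ω)).trans_le
    (mul_le_mul_of_nonneg_left (hM ω) (abs_nonneg c))⟩

theorem isBoundedBorel_indicator_one {K : Set Ω} (hK : MeasurableSet K) :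
    IsBoundedBorel (K.indicator fun _ => (1 : ℝ)) :=
  ⟨measurable_const.indicator hK, 1, fun ω => by
    by_cases hω : ω ∈ K <;> simp [hω]⟩

theorem BoundedContinuousFunction.isBoundedBorel [TopologicalSpace Ω] [OpensMeasurableSpace Ω]
    (φ : Ω →ᵇ ℝ) : IsBoundedBorel φ :=
  ⟨φ.continuous.measurable, ‖φ‖, φ.norm_coe_le_norm⟩

end IsBoundedBorel

structure IsSublinearExpectation {Ω : Type*} [MeasurableSpace Ω] (Ê : (Ω → ℝ) → ℝ) : Prop where
  mono : ∀ X Y : Ω → ℝ, IsBoundedBorel X → IsBoundedBorel Y → (∀ ω, Y ω ≤ X ω) → Ê Y ≤ Ê X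
  map_const : ∀ c : ℝ, Ê (fun _ => c) = c
  add_le : ∀ X Y : Ω → ℝ, IsBoundedBorel X → IsBoundedBorel Y →
    Ê (fun ω => X ω + Y ω) ≤ Ê X + Ê Y
  const_mul : ∀ X : Ω → ℝ, IsBoundedBorel X → ∀ l : ℝ, 0 ≤ l → Ê (fun ω => l * X ω) = l * Ê X

namespace IsSublinearExpectation

variable {Ω : Type*} [MeasurableSpace Ω] {Ê : (Ω → ℝ) → ℝ}

theorem nonneg (hÊ : IsSublinearExpectation Ê) {X : Ω → ℝ} (hX : IsBoundedBorel X)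
    (h : ∀ ω, 0 ≤ X ω) : 0 ≤ Ê X :=
  hÊ.map_const 0 ▸ hÊ.mono _ _ hX (isBoundedBorel_const 0) h

theorem le_add_mul_indicator_compl (hÊ : IsSublinearExpectation Ê) {X : Ω → ℝ}
    (hX : IsBoundedBorel X) {K : Set Ω} (hK : MeasurableSet K) {δ c : ℝ} (hc : 0 ≤ c)
    (hXK : ∀ ω ∈ K, X ω ≤ δ) (hXc : ∀ ω, X ω ≤ δ + c) :
    Ê X ≤ δ + c * Ê (Kᶜ.indicator fun _ => 1) := by
  have hind := isBoundedBorel_indicator_one hK.compl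
  calc Ê X ≤ Ê fun ω => δ + c * Kᶜ.indicator (fun _ => 1) ω := by
        refine hÊ.mono _ _ ((isBoundedBorel_const δ).add (hind.const_mul c)) hX fun ω => ?_
        by_cases hω : ω ∈ K
        · simpa [hω] using hXK ω hω
        · simpa [hω] using hXc ω
    _ ≤ Ê (fun _ => δ) + Ê fun ω => c * Kᶜ.indicator (fun _ => 1) ω :=
        hÊ.add_le _ _ (isBoundedBorel_const δ) (hind.const_mul c)
    _ = δ + c * Ê (Kᶜ.indicator fun _ => 1) := by rw [hÊ.map_const, hÊ.const_mul _ hind c hc]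

end IsSublinearExpectation

theorem abs_le_norm_of_monotone {Ω : Type*} [TopologicalSpace Ω] {F : (Ω →ᵇ ℝ) → ℝ}
    (hmono : Monotone F) (hconst : ∀ c : ℝ, F (const Ω c) = c) (φ : Ω →ᵇ ℝ) : |F φ| ≤ ‖φ‖ := by
  refine abs_le.2 ⟨?_, ?_⟩
  · simpa [hconst] using hmono (show const Ω (-‖φ‖) ≤ φ from φ.neg_norm_le_apply)
  · simpa [hconst] using hmono (show φ ≤ const Ω ‖φ‖ from φ.apply_le_norm)

section Dominated

variable {Ω : Type*} [TopologicalSpace Ω] [MeasurableSpace Ω] [OpensMeasurableSpace Ω]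
  {Ê : (Ω → ℝ) → ℝ}

theorem dist_le_of_dominated (hÊ : IsSublinearExpectation Ê) {F : (Ω →ᵇ ℝ) → ℝ}
    (hF : ∀ X Y : Ω →ᵇ ℝ, F X - F Y ≤ Ê fun ω => X ω - Y ω) {K : Set Ω} (hK : MeasurableSet K)
    {φ ψ : Ω →ᵇ ℝ} {δ : ℝ} (hδ : 0 ≤ δ) (hφψ : ∀ ω ∈ K, dist (φ ω) (ψ ω) ≤ δ) :
    dist (F φ) (F ψ) ≤ δ + ‖φ - ψ‖ * Ê (Kᶜ.indicator fun _ => 1) := by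
  have key : ∀ X Y : Ω →ᵇ ℝ, (∀ ω ∈ K, dist (X ω) (Y ω) ≤ δ) →
      F X - F Y ≤ δ + ‖X - Y‖ * Ê (Kᶜ.indicator fun _ => 1) := fun X Y hXY =>
    (hF X Y).trans <| hÊ.le_add_mul_indicator_compl (X - Y).isBoundedBorel hK (norm_nonneg _)
      (fun ω hω => (le_abs_self _).trans (hXY ω hω))
      (fun ω => ((X - Y).apply_le_norm ω).trans (le_add_of_nonneg_left hδ))
  refine abs_sub_le_iff.2 ⟨key φ ψ hφψ, ?_⟩
  rw [← norm_neg, neg_sub]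
  exact key ψ φ fun ω hω => dist_comm (φ ω) (ψ ω) ▸ hφψ ω hω

theorem exists_mem_forall_dist_lt_of_dominated (hÊ : IsSublinearExpectation Ê) {ι κ : Type*}
    {F : ι → (Ω →ᵇ ℝ) → ℝ} (hF : ∀ a X Y, F a X - F a Y ≤ Ê fun ω => X ω - Y ω)
    {K : κ → Set Ω} (hK : ∀ m, MeasurableSet (K m))
    (hKε : ∀ η > 0, ∃ m, Ê ((K m)ᶜ.indicator fun _ => 1) < η) {D : Set (Ω →ᵇ ℝ)}
    (hD : ∀ m (φ : Ω →ᵇ ℝ), ∀ ε > 0,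
      ∃ ψ ∈ D, ‖ψ‖ ≤ ‖φ‖ + 1 ∧ ∀ ω ∈ K m, dist (φ ω) (ψ ω) < ε)
    (φ : Ω →ᵇ ℝ) {ε : ℝ} (hε : 0 < ε) : ∃ ψ ∈ D, ∀ a, dist (F a φ) (F a ψ) < ε := by
  set c := 2 * ‖φ‖ + 1
  have hc : 0 < c := by positivity
  obtain ⟨m, hm⟩ := hKε (ε / 2 / c) (by positivity)
  obtain ⟨ψ, hψD, hψφ, hφψ⟩ := hD m φ (ε / 2) (by positivity)
  have hind : 0 ≤ Ê ((K m)ᶜ.indicator fun _ => 1) :=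
    hÊ.nonneg (isBoundedBorel_indicator_one (hK m).compl) (indicator_nonneg fun _ _ => zero_le_one)
  have hnorm : ‖φ - ψ‖ ≤ c := (norm_sub_le φ ψ).trans (by linarith)
  refine ⟨ψ, hψD, fun a => ?_⟩
  calc dist (F a φ) (F a ψ) ≤ ε / 2 + ‖φ - ψ‖ * Ê ((K m)ᶜ.indicator fun _ => 1) :=
        dist_le_of_dominated hÊ (hF a) (hK m) (by positivity) fun ω hω => (hφψ ω hω).le
    _ ≤ ε / 2 + c * Ê ((K m)ᶜ.indicator fun _ => 1) := by gcongr
    _ < ε / 2 + c * (ε / 2 / c) := by gcongr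
    _ = ε := by rw [mul_div_cancel₀ _ hc.ne', add_halves]

end Dominated

theorem tight_family_weakly_compact_general
    {Ω : Type*} [MetricSpace Ω] [MeasurableSpace Ω] [BorelSpace Ω]
    (Ehat : (Ω → ℝ) → ℝ)
    (hmono : ∀ X Y : Ω → ℝ, IsBoundedBorel X → IsBoundedBorel Y →
      (∀ ω, Y ω ≤ X ω) → Ehat Y ≤ Ehat X)
    (hconst : ∀ c : ℝ, Ehat (fun _ => c) = c)
    (hsub : ∀ X Y : Ω → ℝ, IsBoundedBorel X → IsBoundedBorel Y →
      Ehat (fun ω => X ω + Y ω) ≤ Ehat X + Ehat Y)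
    (hpos : ∀ X : Ω → ℝ, IsBoundedBorel X → ∀ l : ℝ, 0 ≤ l →
      Ehat (fun ω => l * X ω) = l * Ehat X)
    (htight : ∀ ε : ℝ, 0 < ε → ∃ K : Set Ω, IsCompact K ∧
      Ehat (Kᶜ.indicator fun _ => (1 : ℝ)) < ε)
    {𝒜 : Type*} (E : 𝒜 → (Ω →ᵇ ℝ) → ℝ)
    (hEmono : ∀ (α : 𝒜) (X Y : Ω →ᵇ ℝ), (∀ ω, Y ω ≤ X ω) → E α Y ≤ E α X)
    (hEconst : ∀ (α : 𝒜) (c : ℝ), E α (BoundedContinuousFunction.const Ω c) = c)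
    (hdom : ∀ (α : 𝒜) (X Y : Ω →ᵇ ℝ), E α X - E α Y ≤ Ehat (fun ω => X ω - Y ω)) :
    ∀ α : ℕ → 𝒜, ∃ n : ℕ → ℕ, StrictMono n ∧
      ∀ φ : Ω →ᵇ ℝ, CauchySeq (fun i => E (α (n i)) φ) := by
  intro α
  have hÊ : IsSublinearExpectation Ehat := ⟨hmono, hconst, hsub, hpos⟩
  choose K hKc hKε using fun m : ℕ => htight (1 / (m + 1)) Nat.one_div_pos_of_nat
  have hKsmall : ∀ η > 0, ∃ m, Ehat ((K m)ᶜ.indicator fun _ => 1) < η := fun η hη =>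
    let ⟨m, hm⟩ := exists_nat_one_div_lt hη
    ⟨m, (hKε m).trans hm⟩
  obtain ⟨D, hDc, hD⟩ := exists_countable_forall_norm_le_dist_lt_on_compact hKc
  have := hDc.to_subtype
  obtain ⟨_, n, hn, hlim⟩ := exists_strictMono_forall_tendsto_of_mem_isCompact
    (fun _ => isCompact_Icc) (fun i (ψ : D) => E (α i) ψ) fun i ψ =>
      abs_le.1 (abs_le_norm_of_monotone (fun _ _ h => hEmono _ _ _ h) (hEconst _) ψ)
  refine ⟨n, hn, fun φ => Metric.cauchySeq_of_forall_exists_cauchySeq_dist_lt fun ε hε => ?_⟩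
  obtain ⟨ψ, hψD, hψ⟩ := exists_mem_forall_dist_lt_of_dominated hÊ hdom
    (fun m => (hKc m).measurableSet) hKsmall hD φ hε
  exact ⟨_, (hlim ⟨ψ, hψD⟩).cauchySeq, fun i => hψ _⟩

/-- **Tightness implies weak compactness of a family of nonlinear expectations.**
Let `Ê` be a tight sublinear expectation on the bounded Borel functions of a complete
separable metric space `Ω`, and let `{E α}` be a family of nonlinear expectations on
`C_b(Ω)` such that `E α X − E α Y ≤ Ê[X − Y]` for all `X, Y ∈ C_b(Ω)`.  Then every
sequence in the family admits a subsequence whose values at each `φ ∈ C_b(Ω)` form a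
Cauchy sequence. -/
theorem tight_family_weakly_compact
    {Ω : Type*} [MetricSpace Ω] [CompleteSpace Ω] [TopologicalSpace.SeparableSpace Ω]
    [MeasurableSpace Ω] [BorelSpace Ω]
    (Ehat : (Ω → ℝ) → ℝ)
    (hmono : ∀ X Y : Ω → ℝ, IsBoundedBorel X → IsBoundedBorel Y →
      (∀ ω, Y ω ≤ X ω) → Ehat Y ≤ Ehat X)
    (hconst : ∀ c : ℝ, Ehat (fun _ => c) = c)
    (hsub : ∀ X Y : Ω → ℝ, IsBoundedBorel X → IsBoundedBorel Y →
      Ehat (fun ω => X ω + Y ω) ≤ Ehat X + Ehat Y)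
    (hpos : ∀ X : Ω → ℝ, IsBoundedBorel X → ∀ l : ℝ, 0 ≤ l →
      Ehat (fun ω => l * X ω) = l * Ehat X)
    (htight : ∀ ε : ℝ, 0 < ε → ∃ K : Set Ω, IsCompact K ∧
      Ehat (Kᶜ.indicator fun _ => (1 : ℝ)) < ε)
    {𝒜 : Type*} (E : 𝒜 → (Ω →ᵇ ℝ) → ℝ)
    (hEmono : ∀ (α : 𝒜) (X Y : Ω →ᵇ ℝ), (∀ ω, Y ω ≤ X ω) → E α Y ≤ E α X)
    (hEconst : ∀ (α : 𝒜) (c : ℝ), E α (BoundedContinuousFunction.const Ω c) = c)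
    (hdom : ∀ (α : 𝒜) (X Y : Ω →ᵇ ℝ), E α X - E α Y ≤ Ehat (fun ω => X ω - Y ω)) :
    ∀ α : ℕ → 𝒜, ∃ n : ℕ → ℕ, StrictMono n ∧
      ∀ φ : Ω →ᵇ ℝ, CauchySeq (fun i => E (α (n i)) φ) :=
  tight_family_weakly_compact_general Ehat hmono hconst hsub hpos htight E hEmono hEconst hdom
end

section
/- Fix d ≥ 1, l > 0, and a constant C > 0. Let 𝔽̄ be a functional defined on the space L_l(ℝ^d) of Borel-measurable functions ψ : ℝ^d → ℝ satisfying |ψ(x)| ≤ C_ψ(1 + |x|^l) for some constant C_ψ, such that 𝔽̄ is monotone, 𝔽̄[c] = c for constants, subadditive, positively homogeneous, and 𝔽̄[x ↦ |x|^l] < ∞. Let {F_α}_{α ∈ 𝒜} be a family of functionals F_α : C_b(ℝ^d) → ℝ such that each F_α is monotone with F_α[c] = c for constants, and F_α[φ] − F_α[ψ] ≤ 𝔽̄[φ − ψ] for all φ, ψ ∈ C_b(ℝ^d) and all α ∈ 𝒜. Then {F_α}_{α ∈ 𝒜} is weakly compact: every sequence (F_{α_n})_{n≥1} admits a subsequence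 (F_{α_{n_i}})_{i≥1} such that for each φ ∈ C_b(ℝ^d), the real sequence (F_{α_{n_i}}[φ])_{i≥1} is Cauchy. -/
open MeasureTheory Filter Topology BoundedContinuousFunction

/-- A Borel function on `ℝ^d` of growth at most of order `l`:
`|ψ x| ≤ C_ψ (1 + |x|^l)` for some constant `C_ψ`. -/
def GrowthAtMost {d : ℕ} (l : ℝ) (ψ : EuclideanSpace ℝ (Fin d) → ℝ) : Prop :=
  Measurable ψ ∧ ∃ Cψ : ℝ, ∀ x, |ψ x| ≤ Cψ * (1 + ‖x‖ ^ l)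

open Metric TopologicalSpace

/-! Domination makes every `F α` 1-Lipschitz for the sup norm, since
`F α φ - F α ψ ≤ 𝔽̄[φ - ψ] ≤ 𝔽̄[‖φ - ψ‖∞] = ‖φ - ψ‖∞`. Composing `φ` with the radial retraction onto
the ball of radius `R` changes it only where `|x| > R`, and there by at most
`2‖φ‖ ≤ 2‖φ‖ |x|^l / R^l`; so by domination and positive homogeneity `F α φ` moves by at most
`2‖φ‖ 𝔽̄[|x|^l] / R^l`, uniformly in `α`. The truncated functions factor through
`C(closedBall 0 R, ℝ)` and hence form a separable set, on a countable dense subset of which a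
diagonal subsequence converges; the Lipschitz bound and the uniform truncation estimate carry the
Cauchy property over to every `φ`. -/

theorem cauchySeq_of_forall_exists_cauchySeq_dist_le {α : Type*} [PseudoMetricSpace α]
    {u : ℕ → α} (h : ∀ ε > 0, ∃ v : ℕ → α, CauchySeq v ∧ ∀ i, dist (u i) (v i) ≤ ε) :
    CauchySeq u := by
  refine Metric.cauchySeq_iff'.2 fun ε hε => ?_
  obtain ⟨v, hv, huv⟩ := h (ε / 4) (by positivity)
  obtain ⟨N, hN⟩ := Metric.cauchySeq_iff'.1 hv (ε / 2) (by positivity)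
  refine ⟨N, fun i hi => ?_⟩
  calc dist (u i) (u N) ≤ dist (u i) (v i) + dist (v i) (v N) + dist (v N) (u N) :=
        dist_triangle4 _ _ _ _
    _ < ε := by linarith [huv i, hN i hi, huv N, dist_comm (v N) (u N)]

theorem exists_strictMono_forall_cauchySeq_of_bounded {κ : Type*} [Countable κ]
    (y : ℕ → κ → ℝ) (hy : ∀ k, ∃ B, ∀ m, |y m k| ≤ B) :
    ∃ n : ℕ → ℕ, StrictMono n ∧ ∀ k, CauchySeq fun i => y (n i) k := by
  choose B hB using hy
  have hK : IsCompact (Set.univ.pi fun k => Set.Icc (-B k) (B k)) :=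
    isCompact_univ_pi fun _ => isCompact_Icc
  obtain ⟨z, -, n, hn, hlim⟩ := hK.tendsto_subseq fun m k _ => abs_le.1 (hB k m)
  exact ⟨n, hn, fun k => ((continuous_apply k).tendsto z |>.comp hlim).cauchySeq⟩

theorem TopologicalSpace.IsSeparable.exists_strictMono_forall_cauchySeq {X : Type*}
    [PseudoMetricSpace X] {S : Set X} (hS : IsSeparable S) (G : ℕ → X → ℝ)
    (hG : ∀ m, LipschitzWith 1 (G m)) (hbdd : ∀ x, ∃ B, ∀ m, |G m x| ≤ B) :
    ∃ n : ℕ → ℕ, StrictMono n ∧ ∀ x ∈ S, CauchySeq fun i => G (n i) x := by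
  obtain ⟨c, hc, hSc⟩ := hS
  have := hc.to_subtype
  obtain ⟨n, hn, hcauchy⟩ :=
    exists_strictMono_forall_cauchySeq_of_bounded (fun m (k : c) => G m k) fun k => hbdd k
  refine ⟨n, hn, fun x hx => cauchySeq_of_forall_exists_cauchySeq_dist_le fun ε hε => ?_⟩
  obtain ⟨y, hyc, hxy⟩ := Metric.mem_closure_iff.1 (hSc hx) ε hε
  refine ⟨_, hcauchy ⟨y, hyc⟩, fun i => ?_⟩
  refine ((hG (n i)).dist_le_mul x y).trans ?_
  rw [NNReal.coe_one, one_mul]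
  exact hxy.le

section Truncation

variable {E : Type*} [NormedAddCommGroup E] [NormedSpace ℝ E] {R : ℝ}

noncomputable def closedBallRetraction (hR : 0 < R) : C(E, closedBall (0 : E) R) where
  toFun x := ⟨(R / max R ‖x‖) • x, by
    have hmax : 0 < max R ‖x‖ := hR.trans_le (le_max_left _ _)
    rw [mem_closedBall_zero_iff, norm_smul, Real.norm_of_nonneg (by positivity),
      div_mul_eq_mul_div, div_le_iff₀ hmax]
    exact mul_le_mul_of_nonneg_left (le_max_right _ _) hR.le⟩
  continuous_toFun := by
    refine Continuous.subtype_mk (Continuous.smul ?_ continuous_id) _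
    exact continuous_const.div (continuous_const.max continuous_norm)
      fun x => (hR.trans_le (le_max_left _ _)).ne'

theorem closedBallRetraction_of_norm_le (hR : 0 < R) {x : E} (hx : ‖x‖ ≤ R) :
    (closedBallRetraction hR x : E) = x := by
  simp [closedBallRetraction, max_eq_left hx, hR.ne']

variable [ProperSpace E]

noncomputable def truncate (hR : 0 < R) (φ : E →ᵇ ℝ) : E →ᵇ ℝ :=
  (mkOfCompact ((φ : C(E, ℝ)).restrict (closedBall 0 R))).compContinuous (closedBallRetraction hR)

theorem truncate_apply (hR : 0 < R) (φ : E →ᵇ ℝ) (x : E) :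
    truncate hR φ x = φ (closedBallRetraction hR x) := rfl

theorem isSeparable_range_truncate (hR : 0 < R) :
    IsSeparable (Set.range (truncate (E := E) hR)) :=
  (isSeparable_range ((continuous_compContinuous _).comp
    (ContinuousMap.isometryEquivBoundedOfCompact _ ℝ).continuous)).mono
    (by rintro _ ⟨φ, rfl⟩; exact ⟨_, rfl⟩)

theorem abs_sub_truncate_apply_le {l : ℝ} (hl : 0 ≤ l) (hR : 0 < R) (φ : E →ᵇ ℝ) (x : E) :
    |φ x - truncate hR φ x| ≤ 2 * ‖φ‖ / R ^ l * ‖x‖ ^ l := by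
  rcases le_or_gt ‖x‖ R with hx | hx
  · rw [truncate_apply, closedBallRetraction_of_norm_le hR hx, sub_self, abs_zero]
    positivity
  · have hRl : 0 < R ^ l := Real.rpow_pos_of_pos hR l
    calc |φ x - truncate hR φ x| ≤ 2 * ‖φ‖ := by
          rw [← Real.dist_eq]; exact φ.dist_le_two_norm _ _
      _ ≤ 2 * ‖φ‖ / R ^ l * ‖x‖ ^ l := by
          rw [div_mul_eq_mul_div, le_div_iff₀ hRl]
          gcongr

end Truncation

section Growth

variable {d : ℕ} {l : ℝ}

theorem GrowthAtMost.of_abs_le {f : EuclideanSpace ℝ (Fin d) → ℝ} (hf : Measurable f) {B : ℝ}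
    (hB : ∀ x, |f x| ≤ B) : GrowthAtMost l f := by
  refine ⟨hf, B, fun x => (hB x).trans ?_⟩
  have : 0 ≤ B := (abs_nonneg _).trans (hB 0)
  nlinarith [Real.rpow_nonneg (norm_nonneg x) l]

theorem GrowthAtMost.const_mul {f : EuclideanSpace ℝ (Fin d) → ℝ} (hf : GrowthAtMost l f)
    (c : ℝ) : GrowthAtMost l fun x => c * f x := by
  obtain ⟨hmeas, C, hC⟩ := hf
  refine ⟨hmeas.const_mul c, |c| * C, fun x => ?_⟩
  rw [abs_mul, mul_assoc]
  exact mul_le_mul_of_nonneg_left (hC x) (abs_nonneg c)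

theorem growthAtMost_norm_rpow : GrowthAtMost l fun x : EuclideanSpace ℝ (Fin d) => ‖x‖ ^ l := by
  refine ⟨measurable_norm.pow_const l, 1, fun x => ?_⟩
  rw [abs_of_nonneg (by positivity)]
  linarith

theorem BoundedContinuousFunction.growthAtMost (φ : EuclideanSpace ℝ (Fin d) →ᵇ ℝ) :
    GrowthAtMost l φ :=
  .of_abs_le φ.continuous.measurable fun x => by
    simpa only [Real.norm_eq_abs] using φ.norm_coe_le_norm x

end Growth

section Dominated

variable {d : ℕ} {l : ℝ} {Fbar : (EuclideanSpace ℝ (Fin d) → ℝ) → ℝ}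
  {G : (EuclideanSpace ℝ (Fin d) →ᵇ ℝ) → ℝ}

theorem abs_sub_le_of_dominated
    (hmono : ∀ φ ψ : EuclideanSpace ℝ (Fin d) → ℝ, GrowthAtMost l φ → GrowthAtMost l ψ →
      (∀ x, ψ x ≤ φ x) → Fbar ψ ≤ Fbar φ)
    (hdom : ∀ φ ψ : EuclideanSpace ℝ (Fin d) →ᵇ ℝ, G φ - G ψ ≤ Fbar fun x => φ x - ψ x)
    {g : EuclideanSpace ℝ (Fin d) → ℝ} (hg : GrowthAtMost l g)
    {φ ψ : EuclideanSpace ℝ (Fin d) →ᵇ ℝ} (h : ∀ x, |φ x - ψ x| ≤ g x) :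
    |G φ - G ψ| ≤ Fbar g := by
  have key : ∀ φ ψ : EuclideanSpace ℝ (Fin d) →ᵇ ℝ, (∀ x, |φ x - ψ x| ≤ g x) →
      G φ - G ψ ≤ Fbar g := fun φ ψ h =>
    (hdom φ ψ).trans <| hmono _ _ hg (φ - ψ).growthAtMost fun x => (le_abs_self _).trans (h x)
  refine abs_sub_le_iff.2 ⟨key φ ψ h, key ψ φ fun x => ?_⟩
  rw [abs_sub_comm]
  exact h x

theorem lipschitzWith_one_of_dominated
    (hmono : ∀ φ ψ : EuclideanSpace ℝ (Fin d) → ℝ, GrowthAtMost l φ → GrowthAtMost l ψ →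
      (∀ x, ψ x ≤ φ x) → Fbar ψ ≤ Fbar φ)
    (hconst : ∀ c : ℝ, Fbar (fun _ => c) = c)
    (hdom : ∀ φ ψ : EuclideanSpace ℝ (Fin d) →ᵇ ℝ, G φ - G ψ ≤ Fbar fun x => φ x - ψ x) :
    LipschitzWith 1 G :=
  .mk_one fun φ ψ => by
    rw [Real.dist_eq, ← hconst (dist φ ψ)]
    refine abs_sub_le_of_dominated hmono hdom (.of_abs_le measurable_const fun _ => le_rfl)
      fun x => ?_
    rw [← Real.dist_eq]
    exact dist_coe_le_dist x

theorem abs_sub_truncate_le_of_dominated (hl : 0 ≤ l)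
    (hmono : ∀ φ ψ : EuclideanSpace ℝ (Fin d) → ℝ, GrowthAtMost l φ → GrowthAtMost l ψ →
      (∀ x, ψ x ≤ φ x) → Fbar ψ ≤ Fbar φ)
    (hpos : ∀ φ : EuclideanSpace ℝ (Fin d) → ℝ, GrowthAtMost l φ → ∀ lam : ℝ, 0 ≤ lam →
      Fbar (fun x => lam * φ x) = lam * Fbar φ)
    (hdom : ∀ φ ψ : EuclideanSpace ℝ (Fin d) →ᵇ ℝ, G φ - G ψ ≤ Fbar fun x => φ x - ψ x)
    {R : ℝ} (hR : 0 < R) (φ : EuclideanSpace ℝ (Fin d) →ᵇ ℝ) :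
    |G φ - G (truncate hR φ)| ≤ 2 * ‖φ‖ / R ^ l * Fbar fun x => ‖x‖ ^ l := by
  rw [← hpos _ growthAtMost_norm_rpow _ (by positivity)]
  exact abs_sub_le_of_dominated hmono hdom (growthAtMost_norm_rpow.const_mul _)
    (abs_sub_truncate_apply_le hl hR φ)

end Dominated

theorem exists_nat_div_rpow_lt {l : ℝ} (hl : 0 < l) (c : ℝ) {ε : ℝ} (hε : 0 < ε) :
    ∃ N : ℕ, c / ((N : ℝ) + 1) ^ l < ε := by
  have hlim : Tendsto (fun N : ℕ => c / ((N : ℝ) + 1) ^ l) atTop (𝓝 0) :=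
    tendsto_const_nhds.div_atTop <| (tendsto_rpow_atTop hl).comp <|
      tendsto_atTop_add_const_right _ 1 tendsto_natCast_atTop_atTop
  exact (hlim.eventually (gt_mem_nhds hε)).exists

theorem dominated_family_of_distributions_weakly_compact_general {d : ℕ}
    (l : ℝ) (hl : 0 < l)
    (Fbar : (EuclideanSpace ℝ (Fin d) → ℝ) → ℝ)
    (hmono : ∀ φ ψ : EuclideanSpace ℝ (Fin d) → ℝ, GrowthAtMost l φ → GrowthAtMost l ψ →
      (∀ x, ψ x ≤ φ x) → Fbar ψ ≤ Fbar φ)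
    (hconst : ∀ c : ℝ, Fbar (fun _ => c) = c)
    (hpos : ∀ φ : EuclideanSpace ℝ (Fin d) → ℝ, GrowthAtMost l φ → ∀ lam : ℝ, 0 ≤ lam →
      Fbar (fun x => lam * φ x) = lam * Fbar φ)
    {𝒜 : Type*} (F : 𝒜 → (EuclideanSpace ℝ (Fin d) →ᵇ ℝ) → ℝ)
    (hFconst : ∀ (α : 𝒜) (c : ℝ),
      F α (BoundedContinuousFunction.const (EuclideanSpace ℝ (Fin d)) c) = c)
    (hdom : ∀ (α : 𝒜) (φ ψ : EuclideanSpace ℝ (Fin d) →ᵇ ℝ),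
      F α φ - F α ψ ≤ Fbar (fun x => φ x - ψ x)) :
    ∀ α : ℕ → 𝒜, ∃ n : ℕ → ℕ, StrictMono n ∧
      ∀ φ : EuclideanSpace ℝ (Fin d) →ᵇ ℝ, CauchySeq (fun i => F (α (n i)) φ) := by
  intro α
  have hlip (a : 𝒜) : LipschitzWith 1 (F a) :=
    lipschitzWith_one_of_dominated hmono hconst (hdom a)
  have hbdd (a : 𝒜) (φ : EuclideanSpace ℝ (Fin d) →ᵇ ℝ) : |F a φ| ≤ ‖φ‖ := by
    have hzero : F a 0 = 0 := hFconst a 0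
    simpa [hzero] using (hlip a).dist_le_mul φ 0
  have hS : IsSeparable (⋃ N : ℕ, Set.range (truncate (E := EuclideanSpace ℝ (Fin d))
      (Nat.cast_add_one_pos N))) :=
    .iUnion fun N => isSeparable_range_truncate _
  obtain ⟨n, hn, hcauchy⟩ := hS.exists_strictMono_forall_cauchySeq (fun m => F (α m))
    (fun m => hlip _) fun φ => ⟨‖φ‖, fun m => hbdd (α m) φ⟩
  refine ⟨n, hn, fun φ => cauchySeq_of_forall_exists_cauchySeq_dist_le fun ε hε => ?_⟩
  obtain ⟨N, hN⟩ := exists_nat_div_rpow_lt hl (2 * ‖φ‖ * Fbar fun x => ‖x‖ ^ l) hε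
  refine ⟨_, hcauchy _ (Set.mem_iUnion_of_mem N ⟨φ, rfl⟩), fun i => ?_⟩
  rw [Real.dist_eq]
  refine (abs_sub_truncate_le_of_dominated hl.le hmono hpos (hdom _) _ φ).trans ?_
  rw [div_mul_eq_mul_div]
  exact hN.le

/-- **Weak compactness of a family of nonlinear distributions dominated by a sublinear
expectation on the space `L_l(ℝ^d)` of functions with growth of order `l`.**
Every sequence from the family `{F α}` admits a subsequence whose values at each
`φ ∈ C_b(ℝ^d)` form a Cauchy sequence. -/
theorem dominated_family_of_distributions_weakly_compact
    {d : ℕ} (hd : 1 ≤ d) (l : ℝ) (hl : 0 < l) (C : ℝ) (hC : 0 < C)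
    (Fbar : (EuclideanSpace ℝ (Fin d) → ℝ) → ℝ)
    (hmono : ∀ φ ψ : EuclideanSpace ℝ (Fin d) → ℝ, GrowthAtMost l φ → GrowthAtMost l ψ →
      (∀ x, ψ x ≤ φ x) → Fbar ψ ≤ Fbar φ)
    (hconst : ∀ c : ℝ, Fbar (fun _ => c) = c)
    (hsub : ∀ φ ψ : EuclideanSpace ℝ (Fin d) → ℝ, GrowthAtMost l φ → GrowthAtMost l ψ →
      Fbar (fun x => φ x + ψ x) ≤ Fbar φ + Fbar ψ)
    (hpos : ∀ φ : EuclideanSpace ℝ (Fin d) → ℝ, GrowthAtMost l φ → ∀ lam : ℝ, 0 ≤ lam →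
      Fbar (fun x => lam * φ x) = lam * Fbar φ)
    (hfin : ∃ M : ℝ, Fbar (fun x => ‖x‖ ^ l) ≤ M)
    {𝒜 : Type*} (F : 𝒜 → (EuclideanSpace ℝ (Fin d) →ᵇ ℝ) → ℝ)
    (hFmono : ∀ (α : 𝒜) (φ ψ : EuclideanSpace ℝ (Fin d) →ᵇ ℝ),
      (∀ x, ψ x ≤ φ x) → F α ψ ≤ F α φ)
    (hFconst : ∀ (α : 𝒜) (c : ℝ),
      F α (BoundedContinuousFunction.const (EuclideanSpace ℝ (Fin d)) c) = c)
    (hdom : ∀ (α : 𝒜) (φ ψ : EuclideanSpace ℝ (Fin d) →ᵇ ℝ),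
      F α φ - F α ψ ≤ Fbar (fun x => φ x - ψ x)) :
    ∀ α : ℕ → 𝒜, ∃ n : ℕ → ℕ, StrictMono n ∧
      ∀ φ : EuclideanSpace ℝ (Fin d) →ᵇ ℝ, CauchySeq (fun i => F (α (n i)) φ) :=
  dominated_family_of_distributions_weakly_compact_general l hl Fbar hmono hconst hpos F hFconst
    hdom
end
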